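/- Let v ∈ 𝒰(ℝ) be a threshold utility satisfying liminf_{x→∞} R_v^A(x) = ∞ or liminf_{x→−∞} R_v^A(x) = ∞. Then the only normalised v-Meyer risk measure on 𝒳 is the worst-case risk measure: every monetary risk measure ρ with ρ(0) = 0 that is v-SD-consistent satisfies ρ(X) = ρ^w(X) = ess sup(−X) for all X ∈ 𝒳. -/

import Mathlib

/-!
Monotonicity and cash additivity give `ρ X ≤ ρ^w X =: w`. Conversely, fix `ε > 0`. The event
`X < -w + ε / 2` has positive probability, so a CARA utility with a large enough coefficient `l`
prefers the constant `-w + ε` to `X`. Because `R_v^A` tends to `∞`, a cash shift moves the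
values of `X` and of that constant into an interval on which `R_v^A ≥ l`. There every `u` with
`R_u^A ≥ R_v^A` lies below its tangent CARA utility of coefficient `l`, so the shifted `X` is
`v`-SD-dominated by the shifted constant, and consistency yields `ρ X ≥ w - ε`.
-/

open MeasureTheory Filter Set

noncomputable section

namespace Paper

variable {Ω : Type*} [MeasurableSpace Ω]

/-- The probability measure `P` is atomless. -/
def Atomless (P : Measure Ω) : Prop :=
  ∀ s : Set Ω, MeasurableSet s → 0 < P s →
    ∃ t : Set Ω, MeasurableSet t ∧ t ⊆ s ∧ 0 < P t ∧ P t < P s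

/-- `𝒳`: the essentially bounded random variables. -/
def MemX (P : Measure Ω) (X : Ω → ℝ) : Prop :=
  Measurable X ∧ ∃ C : ℝ, ∀ᵐ ω ∂P, |X ω| ≤ C

/-- `𝒰(I)`: twice differentiable functions with everywhere positive first
derivative on `I`. -/
def IsUtility (I : Set ℝ) (u : ℝ → ℝ) : Prop :=
  (∀ x ∈ I, DifferentiableAt ℝ u x) ∧
  (∀ x ∈ I, DifferentiableAt ℝ (deriv u) x) ∧
  (∀ x ∈ I, 0 < deriv u x)

/-- Arrow–Pratt coefficient of absolute risk aversion. -/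
def RA (u : ℝ → ℝ) (x : ℝ) : ℝ := -deriv (deriv u) x / deriv u x

/-- `𝓛¹_v`: `I`-valued random variables `X` with `v(X)` integrable. -/
def MemL1 (P : Measure Ω) (I : Set ℝ) (v : ℝ → ℝ) (X : Ω → ℝ) : Prop :=
  Measurable X ∧ (∀ᵐ ω ∂P, X ω ∈ I) ∧ Integrable (fun ω => v (X ω)) P

/-- The `v`-SD order: `X ≤_{v-SD} Y`. -/
def vSD (P : Measure Ω) (I : Set ℝ) (v : ℝ → ℝ) (X Y : Ω → ℝ) : Prop :=
  ∀ u : ℝ → ℝ, IsUtility I u → (∀ x ∈ I, RA v x ≤ RA u x) →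
    Integrable (fun ω => u (X ω)) P → Integrable (fun ω => u (Y ω)) P →
    ∫ ω, u (X ω) ∂P ≤ ∫ ω, u (Y ω) ∂P

/-- Second-order stochastic dominance. -/
def SSD (P : Measure Ω) (X Y : Ω → ℝ) : Prop :=
  ∀ u : ℝ → ℝ, IsUtility Set.univ u → ConcaveOn ℝ Set.univ u →
    Integrable (fun ω => u (X ω)) P → Integrable (fun ω => u (Y ω)) P →
    ∫ ω, u (X ω) ∂P ≤ ∫ ω, u (Y ω) ∂P

/-- Monetary risk measure: antitone and cash-additive on `𝒳`. -/
def IsRiskMeasure (P : Measure Ω) (ρ : (Ω → ℝ) → ℝ) : Prop :=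
  (∀ X Y : Ω → ℝ, MemX P X → MemX P Y → (∀ᵐ ω ∂P, X ω ≤ Y ω) → ρ Y ≤ ρ X) ∧
  (∀ X : Ω → ℝ, MemX P X → ∀ c : ℝ, ρ (fun ω => X ω + c) = ρ X - c)

/-- Worst-case risk measure `ρ^w(X) = ess sup (-X)`. -/
def rhoW (P : Measure Ω) (X : Ω → ℝ) : ℝ :=
  sInf {m : ℝ | ∀ᵐ ω ∂P, -X ω ≤ m}

/-- `v`-SD-consistency of `φ` on the domain `D`. -/
def VSDConsistent (P : Measure Ω) (I : Set ℝ) (v : ℝ → ℝ)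
    (D : Set (Ω → ℝ)) (φ : (Ω → ℝ) → ℝ) : Prop :=
  ∀ X Y : Ω → ℝ, X ∈ D → Y ∈ D → MemL1 P I v X → MemL1 P I v Y →
    vSD P I v X Y → φ Y ≤ φ X

/-- `𝒞`: the a.s. strictly positive bounded random variables. -/
def MemC (P : Measure Ω) (X : Ω → ℝ) : Prop :=
  MemX P X ∧ ∀ᵐ ω ∂P, 0 < X ω

/-- `𝓔 = {e^Y : Y ∈ 𝒳}` (up to a.s. equality). -/
def MemE (P : Measure Ω) (X : Ω → ℝ) : Prop :=
  ∃ Y : Ω → ℝ, MemX P Y ∧ ∀ᵐ ω ∂P, X ω = Real.exp (Y ω)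

/-- Return risk measure. -/
def IsRRM (P : Measure Ω) (η : (Ω → ℝ) → ℝ) : Prop :=
  (∀ X : Ω → ℝ, MemC P X → 0 < η X) ∧
  (∀ X Y : Ω → ℝ, MemC P X → MemC P Y → (∀ᵐ ω ∂P, X ω ≤ Y ω) → η Y ≤ η X) ∧
  (∀ X : Ω → ℝ, MemC P X → ∀ t : ℝ, 0 < t → η (fun ω => t * X ω) = t⁻¹ * η X)

/-- Loss-based return risk measure. -/
def IsLossRRM (P : Measure Ω) (κ : (Ω → ℝ) → ℝ) : Prop :=
  (∀ L : Ω → ℝ, MemC P L → 0 < κ L) ∧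
  (∀ L L' : Ω → ℝ, MemC P L → MemC P L' → (∀ᵐ ω ∂P, L' ω ≤ L ω) → κ L' ≤ κ L) ∧
  (∀ L : Ω → ℝ, MemC P L → ∀ t : ℝ, 0 < t → κ (fun ω => t * L ω) = t * κ L)

/-- Base risk measure `ρ_{Z,v}`. -/
def baseRM (P : Measure Ω) (v : ℝ → ℝ) (Z X : Ω → ℝ) : ℝ :=
  sInf {m : ℝ | vSD P Set.univ v Z (fun ω => X ω + m)}

/-- Lower quantile function. -/
def qf (P : Measure Ω) (X : Ω → ℝ) (r : ℝ) : ℝ :=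
  sInf {x : ℝ | r ≤ (P {ω | X ω ≤ x}).toReal}

/-- Expected Shortfall at level `p`. -/
def ES (P : Measure Ω) (p : ℝ) (X : Ω → ℝ) : ℝ :=
  if p < 1 then -(1 / (1 - p)) * ∫ r in (0:ℝ)..(1 - p), qf P X r
  else rhoW P X

lemma antitoneOn_deriv_mul_exp_of_le_RA {u : ℝ → ℝ} {s : Set ℝ} (hs : Convex ℝ s)
    (hu' : ∀ x ∈ s, DifferentiableAt ℝ (deriv u) x) (hu'pos : ∀ x ∈ s, 0 < deriv u x) {l : ℝ}
    (hRA : ∀ x ∈ s, l ≤ RA u x) :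
    AntitoneOn (fun x => deriv u x * Real.exp (l * x)) s := by
  have hderiv : ∀ x ∈ s, HasDerivAt (fun x => deriv u x * Real.exp (l * x))
      ((deriv (deriv u) x + l * deriv u x) * Real.exp (l * x)) x := fun x hx => by
    refine ((hu' x hx).hasDerivAt.mul ((hasDerivAt_id x).const_mul l).exp).congr_deriv ?_
    simp only [id]
    ring
  refine antitoneOn_of_hasDerivWithinAt_nonpos hs
    (fun x hx => (hderiv x hx).continuousAt.continuousWithinAt)
    (fun x hx => (hderiv x (interior_subset hx)).hasDerivWithinAt) fun x hx => ?_
  have hx := interior_subset hx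
  have : l * deriv u x ≤ -deriv (deriv u) x := (le_div_iff₀ (hu'pos x hx)).mp (hRA x hx)
  exact mul_nonpos_of_nonpos_of_nonneg (by linarith) (Real.exp_pos _).le

/-- Risk aversion at least `l` puts `u` below the CARA utility with coefficient `l`
that is tangent to it at `t`. -/
lemma le_add_mul_one_sub_exp_of_le_RA {u : ℝ → ℝ} {s : Set ℝ} (hs : Convex ℝ s)
    (hu : IsUtility s u) {l : ℝ} (hl : 0 < l) (hRA : ∀ x ∈ s, l ≤ RA u x) {t x : ℝ}
    (ht : t ∈ s) (hx : x ∈ s) :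
    u x ≤ u t + deriv u t / l * (1 - Real.exp (-(l * (x - t)))) := by
  obtain ⟨hu, hu', hu'pos⟩ := hu
  set h : ℝ → ℝ := fun x => deriv u x * Real.exp (l * x)
  have hanti : AntitoneOn h s := antitoneOn_deriv_mul_exp_of_le_RA hs hu' hu'pos hRA
  set F : ℝ → ℝ := fun x => u t + deriv u t / l * (1 - Real.exp (-(l * (x - t)))) - u x
  have hF : ∀ y ∈ s, HasDerivAt F (Real.exp (-(l * y)) * (h t - h y)) y := fun y hy => by
    have hexp : HasDerivAt (fun x => Real.exp (-(l * (x - t))))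
        (Real.exp (-(l * (y - t))) * -l) y :=
      (((hasDerivAt_id y).sub_const t).const_mul l).neg.exp.congr_deriv (by simp)
    refine ((((hexp.const_sub 1).const_mul (deriv u t / l)).const_add (u t)).sub
      (hu y hy).hasDerivAt).congr_deriv ?_
    have hexp_sub : Real.exp (-(l * (y - t))) = Real.exp (-(l * y)) * Real.exp (l * t) := by
      rw [← Real.exp_add]; ring_nf
    have hexp_cancel : Real.exp (-(l * y)) * Real.exp (l * y) = 1 := by
      rw [← Real.exp_add]; simp
    rw [hexp_sub]
    linear_combination (Real.exp (-(l * y)) * Real.exp (l * t)) * div_mul_cancel₀ (deriv u t) hl.ne'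
      + deriv u y * hexp_cancel
  have hcont : ContinuousOn F s := fun y hy => (hF y hy).continuousAt.continuousWithinAt
  have hderiv : ∀ D ⊆ s, ∀ y ∈ interior D,
      HasDerivWithinAt F (Real.exp (-(l * y)) * (h t - h y)) (interior D) y :=
    fun D hD y hy => (hF y (hD (interior_subset hy))).hasDerivWithinAt
  suffices F t ≤ F x by simpa [F] using this
  rcases le_total t x with htx | hxt
  · refine monotoneOn_of_hasDerivWithinAt_nonneg (hs.inter (convex_Ici t))
      (hcont.mono inter_subset_left) (hderiv _ inter_subset_left) (fun y hy => ?_)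
      ⟨ht, mem_Ici.2 le_rfl⟩ ⟨hx, htx⟩ htx
    obtain ⟨hys, hty⟩ := interior_subset hy
    exact mul_nonneg (Real.exp_pos _).le (sub_nonneg.2 (hanti ht hys hty))
  · refine antitoneOn_of_hasDerivWithinAt_nonpos (hs.inter (convex_Iic t))
      (hcont.mono inter_subset_left) (hderiv _ inter_subset_left) (fun y hy => ?_)
      ⟨hx, hxt⟩ ⟨ht, mem_Iic.2 le_rfl⟩ hxt
    obtain ⟨hys, hyt⟩ := interior_subset hy
    exact mul_nonpos_of_nonneg_of_nonpos (Real.exp_pos _).le (sub_nonpos.2 (hanti hys ht hyt))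

lemma IsUtility.continuous {u : ℝ → ℝ} (hu : IsUtility univ u) : Continuous u :=
  continuous_iff_continuousAt.2 fun x => (hu.1 x (mem_univ x)).continuousAt

lemma IsUtility.mono {I J : Set ℝ} {u : ℝ → ℝ} (hu : IsUtility I u) (hJI : J ⊆ I) :
    IsUtility J u :=
  ⟨fun x hx => hu.1 x (hJI hx), fun x hx => hu.2.1 x (hJI hx), fun x hx => hu.2.2 x (hJI hx)⟩

lemma vSD_const_of_one_le_integral_exp (P : Measure Ω) [IsProbabilityMeasure P] {v : ℝ → ℝ}
    {I s : Set ℝ} (hsI : s ⊆ I) (hs : Convex ℝ s) {l t : ℝ} (hl : 0 < l)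
    (hRA : ∀ x ∈ s, l ≤ RA v x) {X : Ω → ℝ} (hX : ∀ᵐ ω ∂P, X ω ∈ s) (ht : t ∈ s)
    (hexp : 1 ≤ ∫ ω, Real.exp (-(l * (X ω - t))) ∂P) :
    vSD P I v X (fun _ => t) := by
  intro u hu hvu hintX _
  set g : Ω → ℝ := fun ω => Real.exp (-(l * (X ω - t)))
  -- a non-integrable `g` would have integral `0`
  have hg : Integrable g P := Integrable.of_integral_ne_zero (by linarith)
  have hbound : ∀ᵐ ω ∂P, u (X ω) ≤ u t + deriv u t / l * (1 - g ω) := by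
    filter_upwards [hX] with ω hω
    exact le_add_mul_one_sub_exp_of_le_RA hs (hu.mono hsI) hl
      (fun x hx => (hRA x hx).trans (hvu x (hsI hx))) ht hω
  have hcoef : 0 ≤ deriv u t / l := div_nonneg (hu.2.2 t (hsI ht)).le hl.le
  have hint : Integrable (fun ω => deriv u t / l * (1 - g ω)) P :=
    ((integrable_const 1).sub hg).const_mul _
  calc ∫ ω, u (X ω) ∂P
      ≤ ∫ ω, (u t + deriv u t / l * (1 - g ω)) ∂P :=
        integral_mono_ae hintX ((integrable_const _).add hint) hbound
    _ = u t + deriv u t / l * (1 - ∫ ω, g ω ∂P) := by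
        rw [integral_add (integrable_const _) hint,
          integral_const_mul, integral_sub (integrable_const 1) hg]
        simp
    _ ≤ u t := by nlinarith
    _ = ∫ _, u t ∂P := by simp

lemma exists_one_le_integral_exp {P : Measure Ω} [IsFiniteMeasure P] {X : Ω → ℝ}
    (hXm : Measurable X) {b : ℝ} (hb : ∀ᵐ ω ∂P, b ≤ X ω) {a t : ℝ} (hat : a < t)
    (hpos : 0 < P {ω | X ω < a}) :
    ∃ l > 0, 1 ≤ ∫ ω, Real.exp (-(l * (X ω - t))) ∂P := by
  set p := P.real {ω | X ω < a}
  have hp : 0 < p := ENNReal.toReal_pos hpos.ne' (measure_ne_top _ _)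
  set l := 1 / (p * (t - a))
  have hl : 0 < l := by have := sub_pos.2 hat; positivity
  refine ⟨l, hl, ?_⟩
  set g : Ω → ℝ := fun ω => Real.exp (-(l * (X ω - t)))
  have hg : Integrable g P := by
    refine Integrable.of_bound (C := Real.exp (-(l * (b - t))))
      (Real.measurable_exp.comp ((hXm.sub_const t).const_mul l).neg).aestronglyMeasurable ?_
    filter_upwards [hb] with ω hω
    rw [Real.norm_of_nonneg (Real.exp_pos _).le, Real.exp_le_exp]
    nlinarith
  have hsub : {ω | X ω < a} ⊆ {ω | Real.exp (l * (t - a)) ≤ g ω} := fun ω (hω : X ω < a) =>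
    Real.exp_le_exp.2 (by nlinarith)
  have hexp : 1 / p ≤ Real.exp (l * (t - a)) := by
    have : l * (t - a) = 1 / p := by simp only [l]; field_simp [(sub_pos.2 hat).ne']
    linarith [Real.add_one_le_exp (l * (t - a))]
  calc (1 : ℝ) = 1 / p * p := by field_simp
    _ ≤ Real.exp (l * (t - a)) * P.real {ω | Real.exp (l * (t - a)) ≤ g ω} :=
        mul_le_mul hexp (measureReal_mono hsub) hp.le (Real.exp_pos _).le
    _ ≤ ∫ ω, g ω ∂P :=
        mul_meas_ge_le_integral_of_nonneg (ae_of_all _ fun _ => (Real.exp_pos _).le) hg _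

lemma isLeast_rhoW {P : Measure Ω} [NeZero P] {X : Ω → ℝ} {C : ℝ}
    (hC : ∀ᵐ ω ∂P, |X ω| ≤ C) :
    IsLeast {m : ℝ | ∀ᵐ ω ∂P, -X ω ≤ m} (rhoW P X) := by
  set S := {m : ℝ | ∀ᵐ ω ∂P, -X ω ≤ m}
  have hCS : C ∈ S := hC.mono fun ω hω => (neg_le_abs _).trans hω
  have hbdd : BddBelow S := ⟨-C, fun m hm => by
    obtain ⟨ω, hm, hCω⟩ := ((show ∀ᵐ ω ∂P, -X ω ≤ m from hm).and hC).exists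
    linarith [le_abs_self (X ω)]⟩
  refine ⟨?_, fun m hm => csInf_le hbdd hm⟩
  obtain ⟨m, -, hm, hmS⟩ := exists_seq_tendsto_sInf ⟨C, hCS⟩ hbdd
  filter_upwards [ae_all_iff.2 hmS] with ω hω
  exact ge_of_tendsto' hm hω

lemma ae_neg_le_rhoW {P : Measure Ω} [NeZero P] {X : Ω → ℝ} {C : ℝ}
    (hC : ∀ᵐ ω ∂P, |X ω| ≤ C) : ∀ᵐ ω ∂P, -X ω ≤ rhoW P X :=
  (isLeast_rhoW hC).1

lemma measure_lt_neg_rhoW_add_pos {P : Measure Ω} [NeZero P] {X : Ω → ℝ} {C : ℝ}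
    (hC : ∀ᵐ ω ∂P, |X ω| ≤ C) {δ : ℝ} (hδ : 0 < δ) :
    0 < P {ω | X ω < -rhoW P X + δ} := by
  refine pos_iff_ne_zero.2 fun h => ?_
  have hmem : rhoW P X - δ ∈ {m : ℝ | ∀ᵐ ω ∂P, -X ω ≤ m} := by
    filter_upwards [measure_eq_zero_iff_ae_notMem.1 h] with ω hω
    simp only [not_lt] at hω
    linarith
  linarith [(isLeast_rhoW hC).2 hmem]

lemma IsRiskMeasure.map_const {P : Measure Ω} {ρ : (Ω → ℝ) → ℝ} (hρ : IsRiskMeasure P ρ)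
    (hnorm : ρ (fun _ => 0) = 0) (c : ℝ) : ρ (fun _ => c) = -c := by
  simpa [hnorm] using hρ.2 (fun _ => 0) ⟨measurable_const, 0, ae_of_all _ fun _ => by simp⟩ c

lemma IsRiskMeasure.le_rhoW {P : Measure Ω} [NeZero P] {ρ : (Ω → ℝ) → ℝ}
    (hρ : IsRiskMeasure P ρ) (hconst : ∀ c, ρ (fun _ => c) = -c) {X : Ω → ℝ}
    (hX : MemX P X) : ρ X ≤ rhoW P X := by
  obtain ⟨C, hC⟩ := hX.2
  have := hρ.1 (fun _ => -rhoW P X) X ⟨measurable_const, |rhoW P X|, ae_of_all _ fun _ => by simp⟩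
    hX ((ae_neg_le_rhoW hC).mono fun ω hω => by linarith)
  rwa [hconst, neg_neg] at this

lemma exists_forall_Icc_le_of_tendsto {f : ℝ → ℝ}
    (hf : Tendsto f atTop atTop ∨ Tendsto f atBot atTop) (l L : ℝ) :
    ∃ α, ∀ x ∈ Icc α (α + L), l ≤ f x := by
  rcases hf with hf | hf
  · obtain ⟨N, hN⟩ := eventually_atTop.1 (hf.eventually_ge_atTop l)
    exact ⟨N, fun x hx => hN x hx.1⟩
  · obtain ⟨N, hN⟩ := eventually_atBot.1 (hf.eventually_ge_atTop l)
    exact ⟨N - L, fun x hx => hN x (by linarith [hx.2])⟩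

lemma sub_le_of_vSD_const {P : Measure Ω} [IsFiniteMeasure P] {v : ℝ → ℝ} (hv : Continuous v)
    {α β : ℝ} {ρ : (Ω → ℝ) → ℝ} (hρ : IsRiskMeasure P ρ)
    (hconst : ∀ c, ρ (fun _ => c) = -c) (hcons : VSDConsistent P univ v {X | MemX P X} ρ)
    {X : Ω → ℝ} (hX : MemX P X) {c t : ℝ} (hXc : ∀ᵐ ω ∂P, X ω + c ∈ Icc α β)
    (ht : t ∈ Icc α β) (hsd : vSD P univ v (fun ω => X ω + c) (fun _ => t)) :
    c - t ≤ ρ X := by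
  obtain ⟨B, hB⟩ := isCompact_Icc.exists_bound_of_continuousOn hv.continuousOn
  have hL1 : ∀ Z : Ω → ℝ, Measurable Z → (∀ᵐ ω ∂P, Z ω ∈ Icc α β) → MemL1 P univ v Z :=
    fun Z hZm hZ => ⟨hZm, ae_of_all _ fun _ => mem_univ _,
      Integrable.of_bound (hv.measurable.comp hZm).aestronglyMeasurable
        B (hZ.mono fun _ hω => hB _ hω)⟩
  obtain ⟨hXm, C, hC⟩ := hX
  have hXcmem : MemX P (fun ω => X ω + c) :=
    ⟨hXm.add_const c, C + |c|, hC.mono fun ω hω => (abs_add_le _ _).trans (by linarith)⟩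
  have := hcons _ _ hXcmem ⟨measurable_const, |t|, ae_of_all _ fun _ => le_rfl⟩
    (hL1 _ (hXm.add_const c) hXc) (hL1 _ measurable_const (ae_of_all _ fun _ => ht)) hsd
  rw [hconst, hρ.2 X ⟨hXm, C, hC⟩ c] at this
  linarith

theorem statement10_general (P : Measure Ω) [IsProbabilityMeasure P]
    (v : ℝ → ℝ) (hv : IsUtility Set.univ v)
    (hlim : Tendsto (RA v) atTop atTop ∨ Tendsto (RA v) atBot atTop)
    (ρ : (Ω → ℝ) → ℝ) (hρ : IsRiskMeasure P ρ) (hnorm : ρ (fun _ => 0) = 0)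
    (hcons : VSDConsistent P Set.univ v {X | MemX P X} ρ) :
    ∀ X : Ω → ℝ, MemX P X → ρ X = rhoW P X := by
  intro X hX
  obtain ⟨hXm, C, hC⟩ := id hX
  have hconst := hρ.map_const hnorm
  set w := rhoW P X
  have hw : ∀ᵐ ω ∂P, -X ω ≤ w := ae_neg_le_rhoW hC
  refine le_antisymm (hρ.le_rhoW hconst hX) (le_of_forall_pos_le_add fun ε hε => ?_)
  obtain ⟨l, hl, hexp⟩ := exists_one_le_integral_exp hXm
    (hw.mono fun ω hω => (by linarith : -w ≤ X ω)) (by linarith : -w + ε / 2 < -w + ε)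
    (measure_lt_neg_rhoW_add_pos hC (half_pos hε))
  obtain ⟨α, hα⟩ := exists_forall_Icc_le_of_tendsto hlim l (max (C + w) ε)
  have hXc : ∀ᵐ ω ∂P, X ω + (α + w) ∈ Icc α (α + max (C + w) ε) := by
    filter_upwards [hC, hw] with ω hCω hwω
    exact ⟨by linarith, by linarith [le_max_left (C + w) ε, le_abs_self (X ω)]⟩
  have ht : α + ε ∈ Icc α (α + max (C + w) ε) :=
    ⟨by linarith, by linarith [le_max_right (C + w) ε]⟩
  have hsd := vSD_const_of_one_le_integral_exp P (subset_univ _) (convex_Icc _ _) hl hα hXc ht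
    (by convert hexp using 4 with ω; ring)
  have := sub_le_of_vSD_const hv.continuous hρ hconst hcons hX hXc ht hsd
  linarith

/-- If the threshold utility `v ∈ 𝒰(ℝ)` satisfies
`liminf_{x→∞} R_v^A(x) = ∞` or `liminf_{x→-∞} R_v^A(x) = ∞` (equivalently,
`R_v^A` tends to `∞` at `∞` or at `-∞`), then the only normalised `v`-Meyer risk
measure is the worst-case risk measure. -/
theorem statement10 (P : Measure Ω) [IsProbabilityMeasure P] (hP : Atomless P)
    (v : ℝ → ℝ) (hv : IsUtility Set.univ v)
    (hlim : Tendsto (RA v) atTop atTop ∨ Tendsto (RA v) atBot atTop)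
    (ρ : (Ω → ℝ) → ℝ) (hρ : IsRiskMeasure P ρ) (hnorm : ρ (fun _ => 0) = 0)
    (hcons : VSDConsistent P Set.univ v {X | MemX P X} ρ) :
    ∀ X : Ω → ℝ, MemX P X → ρ X = rhoW P X :=
  statement10_general P v hv hlim ρ hρ hnorm hcons

end Paper
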